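/- Let p be odd, 2 < p/q < 4, and let K' be the Cayley graph of Z_{2p} with connection set {±1, ±3, ..., ±(p-2q)}. Let c_0, c_1, ..., c_{2n-1}, c_0 be a closed walk in K' of length 2n with n odd, and suppose its winding sum Δ = Σ_{i=0}^{2n-1} d(c_{i+1} - c_i) satisfies Δ ≡ 2 (mod 4). Then there exists an index i ∈ Z_{2n} such that |d(c_i - c_{i+n+1})| ≥ 2q and |d(c_{i+1} - c_{i+n})| ≥ 2q (indices mod 2n). -/

import Mathlib

open SimpleGraph

variable {α β γ : Type*}

/-- Tensor (categorical) product of simple graphs. -/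
def tensor (G : SimpleGraph α) (H : SimpleGraph β) : SimpleGraph (α × β) where
  Adj x y := G.Adj x.1 y.1 ∧ H.Adj x.2 y.2
  symm := ⟨fun _ _ ⟨h1, h2⟩ => ⟨h1.symm, h2.symm⟩⟩
  loopless := ⟨fun x ⟨h1, _⟩ => G.loopless.irrefl x.1 h1⟩

/-- Projection of a walk in the tensor product to the first factor. -/
def projG {G : SimpleGraph α} {H : SimpleGraph β} :
    ∀ {x y : α × β}, (tensor G H).Walk x y → G.Walk x.1 y.1
  | _, _, SimpleGraph.Walk.nil => SimpleGraph.Walk.nil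
  | _, _, SimpleGraph.Walk.cons h p => SimpleGraph.Walk.cons h.1 (projG p)

/-- Projection of a walk in the tensor product to the second factor. -/
def projH {G : SimpleGraph α} {H : SimpleGraph β} :
    ∀ {x y : α × β}, (tensor G H).Walk x y → H.Walk x.2 y.2
  | _, _, SimpleGraph.Walk.nil => SimpleGraph.Walk.nil
  | _, _, SimpleGraph.Walk.cons h p => SimpleGraph.Walk.cons h.2 (projH p)

/-- One-step reduction: deleting a consecutive backtracking pair `e, e⁻¹`. -/
inductive RedStep (G : SimpleGraph α) : ∀ {u v : α}, G.Walk u v → G.Walk u v → Prop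
  | cancel {u v a b : α} (h : G.Adj a b) (p : G.Walk u a) (q : G.Walk a v) :
      RedStep G (p.append (SimpleGraph.Walk.cons h (SimpleGraph.Walk.cons h.symm q)))
        (p.append q)

/-- A walk is reduced if no backtracking cancellation applies to it. -/
def Reduced {G : SimpleGraph α} {u v : α} (W : G.Walk u v) : Prop :=
  ∀ W', ¬ RedStep G W W'

/-- Homotopy of walks: equivalence generated by cancellations. -/
def RedEquiv (G : SimpleGraph α) {u v : α} (W W' : G.Walk u v) : Prop :=
  Relation.EqvGen (fun p q => RedStep G p q) W W'

/-- One elementary step of square-equivalence. -/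
inductive SqStep (G : SimpleGraph α) : ∀ {u v : α}, G.Walk u v → G.Walk u v → Prop
  | cancel {u v a b : α} (h : G.Adj a b) (p : G.Walk u a) (q : G.Walk a v) :
      SqStep G (p.append (SimpleGraph.Walk.cons h (SimpleGraph.Walk.cons h.symm q)))
        (p.append q)
  | square {u v a b c d : α} (hab : G.Adj a b) (hbc : G.Adj b c) (had : G.Adj a d)
      (hdc : G.Adj d c) (p : G.Walk u a) (q : G.Walk c v) :
      SqStep G (p.append (SimpleGraph.Walk.cons hab (SimpleGraph.Walk.cons hbc q)))
        (p.append (SimpleGraph.Walk.cons had (SimpleGraph.Walk.cons hdc q)))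

/-- Square-equivalence of walks. -/
def SqEquiv (G : SimpleGraph α) {u v : α} (W W' : G.Walk u v) : Prop :=
  Relation.EqvGen (fun p q => SqStep G p q) W W'

/-- Natural-number power of a closed walk (iterated concatenation). -/
def wpow {G : SimpleGraph α} {u : α} (W : G.Walk u u) : ℕ → G.Walk u u
  | 0 => SimpleGraph.Walk.nil
  | n + 1 => W.append (wpow W n)

/-- Integer power of a closed walk. -/
def wzpow {G : SimpleGraph α} {u : α} (W : G.Walk u u) : ℤ → G.Walk u u
  | Int.ofNat n => wpow W n
  | Int.negSucc n => wpow W.reverse (n + 1)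

/-- A walk `p` is a prefix of `q` (same starting vertex). -/
def WalkPrefix {G : SimpleGraph α} {u x y : α} (p : G.Walk u x) (q : G.Walk u y) : Prop :=
  ∃ r : G.Walk x y, q = p.append r

/-- `K` is square-free: every square is trivial. -/
def SqFree (K : SimpleGraph γ) : Prop :=
  ∀ a b c d : γ, K.Adj a b → K.Adj b c → K.Adj c d → K.Adj d a → a = c ∨ b = d

/-- The circular clique `K_{p/q}` on `ZMod p`. -/
def circClique (p q : ℕ) : SimpleGraph (ZMod p) where
  Adj i j := i ≠ j ∧ ∃ k : ℕ, q ≤ k ∧ k ≤ p - q ∧ (j = i + (k : ZMod p) ∨ i = j + (k : ZMod p))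
  symm := by
    constructor
    rintro i j ⟨hne, k, h1, h2, h3 | h3⟩
    · exact ⟨hne.symm, k, h1, h2, Or.inr h3⟩
    · exact ⟨hne.symm, k, h1, h2, Or.inl h3⟩
  loopless := ⟨fun i h => h.1 rfl⟩


/-- The representative of `x : ZMod (2p)` in `{-(p-1), …, p}`. -/
def dd (p : ℕ) (x : ZMod (2 * p)) : ℤ :=
  if (x.val : ℤ) ≤ (p : ℤ) then (x.val : ℤ) else (x.val : ℤ) - 2 * p

/-- The Cayley graph `K'` of `ZMod (2p)` with connection set the odd residues of
absolute value at most `p - 2q`. -/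
def cayleyOdd (p q : ℕ) : SimpleGraph (ZMod (2 * p)) where
  Adj u v := u ≠ v ∧ ∃ s : ℤ, Odd s ∧ s.natAbs ≤ p - 2 * q ∧ v - u = (s : ZMod (2 * p))
  symm := by
    constructor
    rintro u v ⟨hne, s, hodd, habs, hs⟩
    refine ⟨hne.symm, -s, hodd.neg, by simpa using habs, ?_⟩
    push_cast
    rw [← hs]; ring
  loopless := ⟨fun u h => h.1 rfl⟩

/-- The winding sum `Δ(W) = Σᵢ d(w_{i+1} - w_i)` of a walk in `K'`. -/
def winding (p q : ℕ) {u v : ZMod (2 * p)} (W : (cayleyOdd p q).Walk u v) : ℤ :=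
  (W.darts.map (fun d => dd p (d.toProd.2 - d.toProd.1))).sum

/-!
Lift the closed walk to `ℤ` by summing its steps `d(c_{i+1} - c_i)`: the lift `x` starts at `0`
and ends at `Δ`, which is `2p·w` with `w` odd since `Δ ≡ 2 (mod 4)`. The function
`g j = x (j + n) - x j - p·w` satisfies `g n = -g 0`, so it changes sign between some `j` and
`j + 1`. As every step has size at most `p - 2q`, both chords `x (j + n + 1) - x j` and
`x (j + n) - x (j + 1)` then lie within `p - 2q` of the odd multiple `p·w` of `p`, i.e. of the
antipode of `0` in `ℤ/2p`, so the corresponding vertex differences have `|d| ≥ 2q`.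
-/

namespace SimpleGraph.Walk

variable {V : Type*} {G : SimpleGraph V}

theorem sum_map_darts_eq_sum_range {M : Type*} [AddCommMonoid M] (f : V → V → M) :
    ∀ {u v : V} (W : G.Walk u v),
      (W.darts.map fun d => f d.fst d.snd).sum =
        ∑ k ∈ Finset.range W.length, f (W.getVert k) (W.getVert (k + 1))
  | _, _, nil => by simp
  | _, _, cons h W => by
    rw [darts_cons, List.map_cons, List.sum_cons, sum_map_darts_eq_sum_range f W,
      length_cons, Finset.sum_range_succ', add_comm]
    simp only [getVert_cons_succ, getVert_zero, getVert_cons_succ (n := 0)]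

theorem getVert_mod_length {u : V} (W : G.Walk u u) {k : ℕ} (hk : k ≤ W.length) :
    W.getVert (k % W.length) = W.getVert k := by
  rcases hk.lt_or_eq with hk | rfl
  · rw [Nat.mod_eq_of_lt hk]
  · rw [Nat.mod_self, getVert_zero, getVert_length]

end SimpleGraph.Walk

theorem exists_sign_change {α : Type*} [CommRing α] [LinearOrder α] [IsStrictOrderedRing α]
    (f : ℕ → α) {n : ℕ} (hn : 0 < n) (h : f 0 * f n ≤ 0) :
    ∃ j < n, f j * f (j + 1) ≤ 0 := by
  induction n, hn using Nat.le_induction with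
  | base => exact ⟨0, Nat.one_pos, h⟩
  | succ n hn ih =>
    by_cases hfn : f 0 * f n ≤ 0
    · obtain ⟨j, hj, hj'⟩ := ih hfn
      exact ⟨j, by omega, hj'⟩
    · refine ⟨n, n.lt_succ_self, ?_⟩
      nlinarith [sq_nonneg (f n)]

theorem exists_antipodal_chords_near {α : Type*} [CommRing α] [LinearOrder α]
    [IsStrictOrderedRing α] {x : ℕ → α} {n : ℕ} {r c : α} (hn : 0 < n)
    (hstep : ∀ i < 2 * n, |x (i + 1) - x i| ≤ r) (hx : x (2 * n) - x 0 = 2 * c) :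
    ∃ j < n, |x (j + n + 1) - x j - c| ≤ r ∧ |x (j + n) - x (j + 1) - c| ≤ r := by
  set g : ℕ → α := fun j => x (j + n) - x j - c
  have hg : g 0 * g n ≤ 0 := by
    have : g n = -g 0 := by
      simp only [g, zero_add, ← two_mul]
      linear_combination hx
    rw [this, mul_neg]
    exact neg_nonpos.mpr (mul_self_nonneg _)
  obtain ⟨j, hj, hsign⟩ := exists_sign_change g hn hg
  obtain ⟨ha₁, ha₂⟩ := abs_le.mp (hstep j (by omega))
  obtain ⟨hb₁, hb₂⟩ := abs_le.mp (hstep (j + n) (by omega))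
  have hg₁ : g (j + 1) = x (j + n + 1) - x (j + 1) - c := by
    simp only [g, Nat.add_right_comm]
  refine ⟨j, hj, abs_le.mpr ?_, abs_le.mpr ?_⟩ <;>
    rcases mul_nonpos_iff.mp hsign with ⟨h₀, h₁⟩ | ⟨h₀, h₁⟩ <;>
    simp only [g, hg₁] at h₀ h₁ <;>
    constructor <;> linarith

namespace ZMod

theorem natAbs_valMinAbs_le_natAbs {m : ℕ} [NeZero m] (k : ℤ) :
    (k : ZMod m).valMinAbs.natAbs ≤ k.natAbs :=
  natAbs_min_of_le_div_two m _ k (coe_valMinAbs _) (natAbs_valMinAbs_le _)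

/-- The odd multiples of `p` are the antipode of `0` in `ZMod (2 * p)`. -/
theorem sub_le_abs_valMinAbs_of_abs_sub_le {p : ℕ} {k w r : ℤ} (hw : Odd w)
    (h : |k - p * w| ≤ r) : p - r ≤ |(k : ZMod (2 * p)).valMinAbs| := by
  obtain ⟨t, ht⟩ := (intCast_eq_intCast_iff_dvd_sub _ k (2 * p)).mp (coe_valMinAbs _)
  have hm : 1 ≤ |w - 2 * t| := Int.one_le_abs (by rcases hw with ⟨s, rfl⟩; omega)
  have hpm : (p : ℤ) ≤ |p * (w - 2 * t)| := by
    rw [abs_mul, Nat.abs_cast]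
    exact le_mul_of_one_le_right (Nat.cast_nonneg p) hm
  have hsplit : p * (w - 2 * t) - (k : ZMod (2 * p)).valMinAbs = -(k - p * w) := by
    push_cast at ht
    linear_combination ht
  have := abs_sub_abs_le_abs_sub (p * (w - 2 * t) : ℤ) (k : ZMod (2 * p)).valMinAbs
  rw [hsplit, abs_neg] at this
  linarith

end ZMod

theorem dd_eq_valMinAbs {p : ℕ} [NeZero p] (x : ZMod (2 * p)) : dd p x = x.valMinAbs := by
  simp only [dd, ZMod.valMinAbs_def_pos, Nat.mul_div_cancel_left p two_pos, Nat.cast_le,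
    Nat.cast_mul, Nat.cast_ofNat]

section cayleyOdd

variable {p q : ℕ}

theorem abs_dd_sub_le_of_adj [NeZero p] {u v : ZMod (2 * p)} (h : (cayleyOdd p q).Adj u v) :
    |dd p (v - u)| ≤ ((p - 2 * q : ℕ) : ℤ) := by
  obtain ⟨-, s, -, hs, huv⟩ := h
  rw [dd_eq_valMinAbs, huv, Int.abs_eq_natAbs, Nat.cast_le]
  exact (ZMod.natAbs_valMinAbs_le_natAbs s).trans hs

def partialWinding {u v : ZMod (2 * p)} (W : (cayleyOdd p q).Walk u v) (i : ℕ) : ℤ :=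
  ∑ k ∈ Finset.range i, dd p (W.getVert (k + 1) - W.getVert k)

variable {u v : ZMod (2 * p)} (W : (cayleyOdd p q).Walk u v)

@[simp]
theorem partialWinding_zero : partialWinding W 0 = 0 := by
  simp [partialWinding]

theorem partialWinding_length : partialWinding W W.length = winding p q W :=
  (W.sum_map_darts_eq_sum_range fun a b => dd p (b - a)).symm

theorem abs_partialWinding_succ_sub_le [NeZero p] {i : ℕ} (hi : i < W.length) :
    |partialWinding W (i + 1) - partialWinding W i| ≤ ((p - 2 * q : ℕ) : ℤ) := by
  rw [partialWinding, partialWinding, Finset.sum_range_succ, add_sub_cancel_left]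
  exact abs_dd_sub_le_of_adj (W.adj_getVert_succ hi)

theorem intCast_partialWinding [NeZero p] (i : ℕ) :
    (partialWinding W i : ZMod (2 * p)) = W.getVert i - u := by
  simp only [partialWinding, Int.cast_sum, dd_eq_valMinAbs, ZMod.coe_valMinAbs,
    Finset.sum_range_sub, W.getVert_zero]

theorem intCast_partialWinding_sub [NeZero p] (a b : ℕ) :
    ((partialWinding W a - partialWinding W b : ℤ) : ZMod (2 * p)) =
      W.getVert a - W.getVert b := by
  rw [Int.cast_sub, intCast_partialWinding, intCast_partialWinding, sub_sub_sub_cancel_right]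

theorem two_mul_dvd_winding [NeZero p] (W : (cayleyOdd p q).Walk u u) :
    ((2 * p : ℕ) : ℤ) ∣ winding p q W := by
  rw [← ZMod.intCast_zmod_eq_zero_iff_dvd, ← partialWinding_length, intCast_partialWinding,
    W.getVert_length, sub_self]

theorem two_mul_le_abs_dd_of_near_odd_multiple [NeZero p] (hqp : 2 * q ≤ p) {w : ℤ}
    (hw : Odd w) {a b : ℕ}
    (h : |partialWinding W b - partialWinding W a - p * w| ≤ ((p - 2 * q : ℕ) : ℤ)) :
    2 * (q : ℤ) ≤ |dd p (W.getVert a - W.getVert b)| := by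
  have hneg : |partialWinding W a - partialWinding W b - p * -w| ≤ ((p - 2 * q : ℕ) : ℤ) := by
    rw [← abs_neg]
    convert h using 2
    ring
  have := ZMod.sub_le_abs_valMinAbs_of_abs_sub_le hw.neg hneg
  rw [intCast_partialWinding_sub, Nat.cast_sub hqp] at this
  rw [dd_eq_valMinAbs]
  push_cast at this
  linarith

end cayleyOdd

theorem antipodal_lemma_general {p q n : ℕ} (h2 : 2 * q < p) {c : ZMod (2 * p)}
    (W : (cayleyOdd p q).Walk c c) (hlen : W.length = 2 * n)
    (hwind : winding p q W % 4 = 2) :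
    ∃ i < 2 * n,
      2 * (q : ℤ) ≤ |dd p (W.getVert (i % (2 * n)) - W.getVert ((i + n + 1) % (2 * n)))| ∧
      2 * (q : ℤ) ≤ |dd p (W.getVert ((i + 1) % (2 * n)) - W.getVert ((i + n) % (2 * n)))| := by
  have : NeZero p := ⟨by omega⟩
  obtain ⟨w, hΔ⟩ := two_mul_dvd_winding W
  have hw : Odd w := by
    by_contra hw
    obtain ⟨m, rfl⟩ := Int.not_odd_iff_even.mp hw
    rw [hΔ, show ((2 * p : ℕ) : ℤ) * (m + m) = 4 * (p * m) by push_cast; ring,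
      Int.mul_emod_right] at hwind
    exact absurd hwind (by decide)
  have hn : 0 < n := Nat.pos_of_ne_zero <| by
    rintro rfl
    rw [← partialWinding_length, hlen, partialWinding_zero] at hwind
    exact absurd hwind (by decide)
  obtain ⟨j, hj, hnear₁, hnear₂⟩ := exists_antipodal_chords_near (c := p * w) hn
    (fun i hi => abs_partialWinding_succ_sub_le W (hlen ▸ hi))
    (by rw [← hlen, partialWinding_length, partialWinding_zero, hΔ]; push_cast; ring)
  refine ⟨j, by omega, ?_, ?_⟩ <;> rw [← hlen, W.getVert_mod_length (by omega),
    W.getVert_mod_length (by omega)]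
  · exact two_mul_le_abs_dd_of_near_odd_multiple W h2.le hw hnear₁
  · exact two_mul_le_abs_dd_of_near_odd_multiple W h2.le hw hnear₂

/-- discrete antipodal lemma. If a closed walk of length `2n` (`n` odd)
in `K'` has winding sum `≡ 2 (mod 4)`, then some pair of (almost) antipodal
vertices along it is far apart: `|d(c_i - c_{i+n+1})| ≥ 2q` and
`|d(c_{i+1} - c_{i+n})| ≥ 2q`. -/
theorem antipodal_lemma {p q n : ℕ} (hq : 0 < q) (h2 : 2 * q < p) (h4 : p < 4 * q)
    (hp : Odd p) (hn : Odd n) {c : ZMod (2 * p)}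
    (W : (cayleyOdd p q).Walk c c) (hlen : W.length = 2 * n)
    (hwind : winding p q W % 4 = 2) :
    ∃ i < 2 * n,
      2 * (q : ℤ) ≤ |dd p (W.getVert (i % (2 * n)) - W.getVert ((i + n + 1) % (2 * n)))| ∧
      2 * (q : ℤ) ≤ |dd p (W.getVert ((i + 1) % (2 * n)) - W.getVert ((i + n) % (2 * n)))| :=
  antipodal_lemma_general h2 W hlen hwind
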